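/- arXiv:1211.3005 — 3 statements merged into one kernel-verified Lean document; each statement's English description precedes it below -/
import Mathlib

section
/- For every β̂ ∈ [0,1) and every x, the third derivative of ξ(x) = atanh(β̂ · tanh x) satisfies ξ'''(x) ≥ −2β̂/(1−β̂²). -/
/-!
Since `tanh' = 1 - tanh²`, every derivative of `ξ` is a rational function of `t = tanh x`:
`ξ' = b(1-t²)/(1-b²t²)`, `ξ'' = -2b(1-b²)t(1-t²)/(1-b²t²)²` and
`ξ''' = -2b(1-b²)(1-t²)(1-3(1-b²)t²-b²t⁴)/(1-b²t²)³`. With `a = b²` and `s = t² ∈ [0,1)` the bound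
becomes the polynomial inequality `(1-a)²(1-s)(1-3(1-a)s-as²) ≤ (1-as)³`, whose defect is a sum of
products of the nonnegative quantities `a`, `s`, `1-a`, `1-s`.
-/

/-- The inverse hyperbolic tangent. -/
noncomputable def artanh (x : ℝ) : ℝ := Real.log ((1 + x) / (1 - x)) / 2

theorem hasDerivAt_tanh (y : ℝ) : HasDerivAt Real.tanh (1 - Real.tanh y ^ 2) y := by
  have hcosh := Real.cosh_pos y
  have h := (Real.hasDerivAt_sinh y).div (Real.hasDerivAt_cosh y) hcosh.ne'
  rw [show Real.sinh / Real.cosh = Real.tanh from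
    funext fun _ => (Real.tanh_eq_sinh_div_cosh _).symm] at h
  refine h.congr_deriv ?_
  rw [Real.tanh_eq_sinh_div_cosh]
  field_simp

theorem hasDerivAt_artanh {u : ℝ} (hu : u ^ 2 < 1) : HasDerivAt artanh (1 - u ^ 2)⁻¹ u := by
  obtain ⟨h₁, h₂⟩ := abs_lt.mp ((sq_lt_one_iff_abs_lt_one u).mp hu)
  have hp : 1 + u ≠ 0 := by linarith
  have hm : 1 - u ≠ 0 := by linarith
  have hquot : HasDerivAt (fun x => (1 + x) / (1 - x)) (2 / (1 - u) ^ 2) u := by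
    refine (((hasDerivAt_id' u).const_add 1).div
      ((hasDerivAt_id' u).const_sub 1) hm).congr_deriv ?_
    ring
  refine ((hquot.log (div_ne_zero hp hm)).div_const 2).congr_deriv ?_
  have : 1 - u ^ 2 ≠ 0 := by linarith
  field_simp
  ring

theorem deriv_comp_tanh {g g' h : ℝ → ℝ} (hg : ∀ t, t ^ 2 < 1 → HasDerivAt g (g' t) t)
    (hh : ∀ t, t ^ 2 < 1 → g' t * (1 - t ^ 2) = h t) :
    deriv (fun y => g (Real.tanh y)) = fun y => h (Real.tanh y) := by
  funext y
  rw [← hh _ (Real.tanh_sq_lt_one y)]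
  exact ((hg _ (Real.tanh_sq_lt_one y)).comp y (hasDerivAt_tanh y)).deriv

/-- `xiDerivₖ b (tanh x)` is the `k`-th derivative of `ξ(x) = artanh (b * tanh x)`. -/
noncomputable def xiDeriv₁ (b t : ℝ) : ℝ := b * (1 - t ^ 2) / (1 - b ^ 2 * t ^ 2)
noncomputable def xiDeriv₂ (b t : ℝ) : ℝ :=
  -(2 * b * (1 - b ^ 2)) * t * (1 - t ^ 2) / (1 - b ^ 2 * t ^ 2) ^ 2
noncomputable def xiDeriv₃ (b t : ℝ) : ℝ :=
  -(2 * b * (1 - b ^ 2)) * (1 - t ^ 2) * (1 - 3 * (1 - b ^ 2) * t ^ 2 - b ^ 2 * t ^ 4) /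
    (1 - b ^ 2 * t ^ 2) ^ 3

theorem hasDerivAt_xiDeriv₁ {b t : ℝ} (h : 1 - b ^ 2 * t ^ 2 ≠ 0) :
    HasDerivAt (xiDeriv₁ b) (-(2 * b * (1 - b ^ 2)) * t / (1 - b ^ 2 * t ^ 2) ^ 2) t := by
  have hsq := hasDerivAt_pow 2 t
  refine ((hsq.const_sub 1 |>.const_mul b).div
    (hsq.const_mul (b ^ 2) |>.const_sub 1) h).congr_deriv ?_
  field_simp
  ring

theorem hasDerivAt_xiDeriv₂ {b t : ℝ} (h : 1 - b ^ 2 * t ^ 2 ≠ 0) :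
    HasDerivAt (xiDeriv₂ b)
      (-(2 * b * (1 - b ^ 2)) * (1 - 3 * (1 - b ^ 2) * t ^ 2 - b ^ 2 * t ^ 4) /
        (1 - b ^ 2 * t ^ 2) ^ 3) t := by
  have hsq := hasDerivAt_pow 2 t
  refine ((((hasDerivAt_id' t).const_mul _).fun_mul (hsq.const_sub 1)).div
    ((hsq.const_mul (b ^ 2) |>.const_sub 1).fun_pow 2) (pow_ne_zero 2 h)).congr_deriv ?_
  field_simp
  ring

theorem one_sub_sq_mul_sq_pos {b t : ℝ} (hb : b ^ 2 ≤ 1) (ht : t ^ 2 < 1) :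
    0 < 1 - b ^ 2 * t ^ 2 := by
  nlinarith [sq_nonneg b, sq_nonneg t]

theorem iteratedDeriv_three_artanh_mul_tanh {b : ℝ} (hb : b ^ 2 ≤ 1) :
    iteratedDeriv 3 (fun y => artanh (b * Real.tanh y)) = fun y => xiDeriv₃ b (Real.tanh y) := by
  have hpos {t : ℝ} (ht : t ^ 2 < 1) := one_sub_sq_mul_sq_pos hb ht
  have h₁ : deriv (fun y => artanh (b * Real.tanh y)) = fun y => xiDeriv₁ b (Real.tanh y) :=
    deriv_comp_tanh (fun t ht => (hasDerivAt_artanh (by rw [mul_pow]; linarith [hpos ht])).comp t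
      ((hasDerivAt_id' t).const_mul b)) (fun _ _ => by rw [xiDeriv₁, mul_pow]; ring)
  have h₂ : deriv (fun y => xiDeriv₁ b (Real.tanh y)) = fun y => xiDeriv₂ b (Real.tanh y) :=
    deriv_comp_tanh (fun _ ht => hasDerivAt_xiDeriv₁ (hpos ht).ne')
      (fun _ _ => by rw [xiDeriv₂]; ring)
  have h₃ : deriv (fun y => xiDeriv₂ b (Real.tanh y)) = fun y => xiDeriv₃ b (Real.tanh y) :=
    deriv_comp_tanh (fun _ ht => hasDerivAt_xiDeriv₂ (hpos ht).ne')
      (fun _ _ => by rw [xiDeriv₃]; ring)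
  rw [iteratedDeriv_eq_iterate]
  change deriv (deriv (deriv _)) = _
  rw [h₁, h₂, h₃]

theorem neg_two_mul_div_le_xiDeriv₃ {b t : ℝ} (hb0 : 0 ≤ b) (hb1 : b < 1) (ht : t ^ 2 < 1) :
    -(2 * b) / (1 - b ^ 2) ≤ xiDeriv₃ b t := by
  have hb2 : b ^ 2 < 1 := by nlinarith
  have hpoly : (1 - b ^ 2) ^ 2 * (1 - t ^ 2) * (1 - 3 * (1 - b ^ 2) * t ^ 2 - b ^ 2 * t ^ 4) ≤
      (1 - b ^ 2 * t ^ 2) ^ 3 := by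
    have ha : 0 ≤ b ^ 2 := sq_nonneg b
    have hs : 0 ≤ t ^ 2 := sq_nonneg t
    have hc : 0 ≤ 1 - b ^ 2 := by linarith
    have hv : 0 ≤ 1 - t ^ 2 := by linarith
    linear_combination
      mul_nonneg (sq_nonneg (1 - t ^ 2)) (add_nonneg (add_nonneg (mul_nonneg ha hv)
        (mul_nonneg hc hs)) (mul_nonneg (mul_nonneg hc ha) (by linarith : (0 : ℝ) ≤ 1 + t ^ 2))) +
      3 * mul_nonneg (mul_nonneg hv (sq_nonneg (1 - b ^ 2))) (sq_nonneg (t ^ 2)) +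
      mul_nonneg (pow_nonneg hc 3) (pow_nonneg hs 3) +
      mul_nonneg (mul_nonneg (mul_nonneg (pow_nonneg hc 3) hv) hs)
        (by linarith : (0 : ℝ) ≤ 3 - t ^ 2)
  rw [xiDeriv₃, div_le_div_iff₀ (by linarith) (pow_pos (one_sub_sq_mul_sq_pos hb2.le ht) 3)]
  linear_combination mul_le_mul_of_nonneg_left hpoly (by linarith : (0 : ℝ) ≤ 2 * b)

/-- For every `β̂ ∈ [0,1)` and every `x`, the third derivative of
`ξ(x) = atanh (β̂ * tanh x)` satisfies `ξ'''(x) ≥ -2β̂/(1-β̂²)`. -/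
theorem third_deriv_xi_lower (b : ℝ) (hb0 : 0 ≤ b) (hb1 : b < 1) (x : ℝ) :
    -(2 * b) / (1 - b ^ 2) ≤ iteratedDeriv 3 (fun y => artanh (b * Real.tanh y)) x := by
  rw [iteratedDeriv_three_artanh_mul_tanh (by nlinarith)]
  exact neg_two_mul_div_le_xiDeriv₃ hb0 hb1 (Real.tanh_sq_lt_one x)
end

section
/- Let ν > 1, β_c = atanh(1/ν), and β̂_c = 1/ν. If c ≥ 0 satisfies c ≤ atanh(β̂_c · tanh(ν c)), then c = 0. -/
lemma artanh_tanh' (x : ℝ) : artanh (Real.tanh x) = x := by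
  unfold artanh
  rw [Real.tanh_eq_sinh_div_cosh]
  have hc : (0:ℝ) < Real.cosh x := Real.cosh_pos x
  have hnum : 1 + Real.sinh x / Real.cosh x
      = (Real.cosh x + Real.sinh x) / Real.cosh x := by
    field_simp
  have hden : 1 - Real.sinh x / Real.cosh x
      = (Real.cosh x - Real.sinh x) / Real.cosh x := by
    field_simp
  rw [hnum, hden, div_div_div_cancel_right₀ hc.ne',
    Real.cosh_add_sinh, Real.cosh_sub_sinh, ← Real.exp_sub, Real.log_exp]
  ring

lemma tanh_lt_one' (x : ℝ) : Real.tanh x < 1 := by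
  rw [Real.tanh_eq_sinh_div_cosh, div_lt_one (Real.cosh_pos x)]
  exact Real.sinh_lt_cosh x

lemma tanh_nonneg' {x : ℝ} (hx : 0 ≤ x) : 0 ≤ Real.tanh x := by
  rw [Real.tanh_eq_sinh_div_cosh]
  exact div_nonneg (by rwa [← Real.sinh_zero, Real.sinh_le_sinh]) (Real.cosh_pos x).le

lemma artanh_lt_artanh {x y : ℝ} (hx : -1 < x) (hy : y < 1) (hxy : x < y) :
    artanh x < artanh y := by
  unfold artanh
  have h1x : 0 < 1 + x := by linarith
  have h1y : 0 < 1 - y := by linarith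
  have hnum : (1 + x) / (1 - x) < (1 + y) / (1 - y) := by
    rw [div_lt_div_iff₀ (by linarith) h1y]
    nlinarith
  have := Real.log_lt_log (div_pos h1x (by linarith)) hnum
  linarith

lemma hasDerivAt_tanh' (x : ℝ) :
    HasDerivAt Real.tanh (1 / Real.cosh x ^ 2) x := by
  have hc : Real.cosh x ≠ 0 := (Real.cosh_pos x).ne'
  have h := (Real.hasDerivAt_sinh x).div (Real.hasDerivAt_cosh x) hc
  have heq : (Real.cosh x * Real.cosh x - Real.sinh x * Real.sinh x) / Real.cosh x ^ 2
      = 1 / Real.cosh x ^ 2 := by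
    have h2 := Real.cosh_sq_sub_sinh_sq x
    rw [show Real.cosh x * Real.cosh x - Real.sinh x * Real.sinh x
        = Real.cosh x ^ 2 - Real.sinh x ^ 2 by ring, h2]
  rw [heq] at h
  exact h.congr_of_eventuallyEq
    (Filter.Eventually.of_forall fun y => Real.tanh_eq_sinh_div_cosh y)

/-- Key inequality: `tanh (ν * x) < ν * tanh x` for `ν > 1`, `x > 0`. -/
lemma tanh_mul_lt {ν x : ℝ} (hν : 1 < ν) (hx : 0 < x) :
    Real.tanh (ν * x) < ν * Real.tanh x := by
  set f : ℝ → ℝ := fun y => ν * Real.tanh y - Real.tanh (ν * y) with hf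
  have hmono : StrictMonoOn f (Set.Ici 0) := by
    apply strictMonoOn_of_deriv_pos (convex_Ici 0)
    · apply Continuous.continuousOn
      have ht : Continuous Real.tanh := by
        have heq : Real.tanh = fun y => Real.sinh y / Real.cosh y := by
          funext y; exact Real.tanh_eq_sinh_div_cosh y
        rw [heq]
        exact Real.continuous_sinh.div Real.continuous_cosh fun y => (Real.cosh_pos y).ne'
      exact (continuous_const.mul ht).sub (ht.comp (continuous_const.mul continuous_id))
    · intro y hy
      rw [interior_Ici, Set.mem_Ioi] at hy
      have h1 : HasDerivAt (fun z => ν * Real.tanh z) (ν * (1 / Real.cosh y ^ 2)) y :=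
        (hasDerivAt_tanh' y).const_mul ν
      have hmul : HasDerivAt (fun z : ℝ => ν * z) ν y := by
        simpa using (hasDerivAt_id y).const_mul ν
      have h2 : HasDerivAt (fun z => Real.tanh (ν * z))
          ((1 / Real.cosh (ν * y) ^ 2) * ν) y :=
        (hasDerivAt_tanh' (ν * y)).comp y hmul
      have hd : HasDerivAt f (ν * (1 / Real.cosh y ^ 2) - (1 / Real.cosh (ν * y) ^ 2) * ν) y :=
        h1.sub h2
      rw [hd.deriv]
      have hcc : Real.cosh y < Real.cosh (ν * y) := by
        rw [Real.cosh_lt_cosh]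
        rw [abs_of_pos hy, abs_of_pos (by nlinarith)]
        nlinarith
      have hcp : 0 < Real.cosh y := Real.cosh_pos y
      have hlt : 1 / Real.cosh (ν * y) ^ 2 < 1 / Real.cosh y ^ 2 := by
        apply one_div_lt_one_div_of_lt (by positivity)
        nlinarith
      nlinarith
  have h0 : f 0 < f x := hmono Set.self_mem_Ici (Set.mem_Ici.2 hx.le) hx
  have hf0 : f 0 = 0 := by simp [hf, Real.tanh_eq_sinh_div_cosh, Real.sinh_zero]
  rw [hf0] at h0
  simp only [hf] at h0
  linarith

/-- Continuity of the phase transition: for `ν > 1`, `β̂_c = 1/ν`, if `c ≥ 0` satisfies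
`c ≤ atanh(β̂_c tanh(ν c))`, then `c = 0`. -/
theorem continuous_phase_transition (ν c : ℝ) (hν : 1 < ν) (hc : 0 ≤ c)
    (hfix : c ≤ artanh ((1 / ν) * Real.tanh (ν * c))) : c = 0 := by
  by_contra h
  have hcpos : 0 < c := lt_of_le_of_ne hc (Ne.symm h)
  have hνpos : 0 < ν := by linarith
  set y := (1 / ν) * Real.tanh (ν * c) with hy
  have hkey : Real.tanh (ν * c) < ν * Real.tanh c := tanh_mul_lt hν hcpos
  have hylt : y < Real.tanh c := by
    rw [hy, div_mul_eq_mul_div, one_mul, div_lt_iff₀ hνpos]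
    nlinarith [hkey]
  have hyge : -1 < y := by
    have h1 : 0 ≤ Real.tanh (ν * c) := tanh_nonneg' (by positivity)
    have h2 : 0 ≤ y := by positivity
    linarith
  have hlt : artanh y < artanh (Real.tanh c) :=
    artanh_lt_artanh hyge (tanh_lt_one' c) hylt
  rw [artanh_tanh'] at hlt
  linarith
end

section
/- Suppose h is a nonnegative random variable satisfying h =_d B + Σ_{i=1}^K ξ(h_i) with ξ(x) = atanh(β̂ tanh x), β̂ = tanh β ∈ (0,1), B > 0, K a non-negative integer random variable with E[K] = ν and E[K²] < ∞, independent of the i.i.d. copies (h_i) of h, and suppose β̂²ν < 1. Then E[ξ(h)²] ≤ (β̂²ν₂/(1−β̂²ν))·E[ξ(h)]² + B·(Bβ̂² + 2β̂²ν E[ξ(h)])/(1−β̂²ν), where ν₂ = E[K(K−1)]. -/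
/-!
Since `artanh` is increasing and `tanh` is concave on `[0, ∞)` with `tanh 0 = 0`, the map
`ξ x = artanh (β̂ tanh x)` satisfies `0 ≤ ξ x ≤ β̂ x` for `x ≥ 0`. With `S = Σ_{i<K} ξ(h_i)` and
`h =_d B + S`, this gives `E[ξ(h)²] ≤ β̂² E[(B + S)²]`. Freezing the independent `K` and using the
pairwise independence of the summands, `E[S] = ν m` and `E[S²] = ν q + ν₂ m²`, where
`m = E[ξ(h)]`, `q = E[ξ(h)²]`. Hence `q ≤ β̂² (B² + 2Bνm + νq + ν₂m²)`, which rearranges to the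
claim because `β̂²ν < 1`. The moments of `S` are computed with `ℝ≥0∞`-valued integrals, so no
integrability of `S` has to be established.
-/

open MeasureTheory ProbabilityTheory Finset
open scoped ENNReal NNReal

namespace Real

theorem hasDerivAt_tanh (x : ℝ) : HasDerivAt tanh (1 / cosh x ^ 2) x := by
  have h := (hasDerivAt_sinh x).div (hasDerivAt_cosh x) (cosh_pos x).ne'
  rw [show tanh = sinh / cosh from funext tanh_eq_sinh_div_cosh]
  refine h.congr_deriv ?_
  rw [← sq, ← sq, cosh_sq]
  ring

theorem continuous_tanh : Continuous tanh :=
  continuous_iff_continuousAt.2 fun x => (hasDerivAt_tanh x).continuousAt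

theorem tanh_nonneg {x : ℝ} (hx : 0 ≤ x) : 0 ≤ tanh x := by
  rw [tanh_eq_sinh_div_cosh]
  exact div_nonneg (sinh_nonneg_iff.2 hx) (cosh_pos x).le

theorem abs_mul_tanh_lt_one {c : ℝ} (hc₀ : 0 ≤ c) (hc₁ : c ≤ 1) (x : ℝ) : |c * tanh x| < 1 := by
  rw [abs_mul, abs_of_nonneg hc₀]
  exact (mul_le_of_le_one_left (abs_nonneg _) hc₁).trans_lt (abs_tanh_lt_one x)

theorem mul_tanh_le_tanh_mul {c x : ℝ} (hc₀ : 0 ≤ c) (hc₁ : c ≤ 1) (hx : 0 ≤ x) :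
    c * tanh x ≤ tanh (c * x) := by
  have hderiv (y : ℝ) : HasDerivAt (fun y => tanh (c * y) - c * tanh y)
      (c * (1 / cosh (c * y) ^ 2 - 1 / cosh y ^ 2)) y := by
    refine (((hasDerivAt_tanh (c * y)).comp y ((hasDerivAt_id y).const_mul c)).sub
      ((hasDerivAt_tanh y).const_mul c)).congr_deriv ?_
    ring
  have hmono : Monotone (fun y => tanh (c * y) - c * tanh y) := by
    refine monotone_of_deriv_nonneg (fun y => (hderiv y).differentiableAt) fun y => ?_
    rw [(hderiv y).deriv]
    have hcosh : cosh (c * y) ≤ cosh y := by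
      rw [cosh_le_cosh, abs_mul, abs_of_nonneg hc₀]
      exact mul_le_of_le_one_left (abs_nonneg y) hc₁
    have := cosh_pos (c * y)
    have : 1 / cosh y ^ 2 ≤ 1 / cosh (c * y) ^ 2 := by gcongr
    nlinarith
  simpa using hmono hx

theorem artanh_mul_tanh_le {c x : ℝ} (hc₀ : 0 ≤ c) (hc₁ : c ≤ 1) (hx : 0 ≤ x) :
    artanh (c * tanh x) ≤ c * x :=
  calc artanh (c * tanh x) ≤ artanh (tanh (c * x)) :=
        artanh_le_artanh (neg_lt_of_abs_lt (abs_mul_tanh_lt_one hc₀ hc₁ x)) (tanh_lt_one _)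
          (mul_tanh_le_tanh_mul hc₀ hc₁ hx)
    _ = c * x := artanh_tanh _

end Real

theorem artanh_eq_real_artanh {x : ℝ} (hx : x ∈ Set.Icc (-1) 1) : artanh x = Real.artanh x := by
  rw [Real.artanh_eq_half_log hx, artanh]
  ring

theorem artanh_mul_tanh_mem_Icc {c x : ℝ} (hc₀ : 0 ≤ c) (hc₁ : c ≤ 1) (hx : 0 ≤ x) :
    artanh (c * Real.tanh x) ∈ Set.Icc 0 (c * x) := by
  rw [artanh_eq_real_artanh (abs_le.1 (Real.abs_mul_tanh_lt_one hc₀ hc₁ x).le)]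
  exact ⟨Real.artanh_nonneg (mul_nonneg hc₀ (Real.tanh_nonneg hx)),
    Real.artanh_mul_tanh_le hc₀ hc₁ hx⟩

theorem measurable_artanh : Measurable artanh := by
  unfold artanh
  fun_prop

section CompoundSums

variable {Ω : Type*} [MeasurableSpace Ω] {μ : Measure Ω}

theorem measurable_sum_range_of_measurable {M : Type*} [AddCommMonoid M] [MeasurableSpace M]
    [MeasurableAdd₂ M] {Y : ℕ → Ω → M} {K : Ω → ℕ} (hY : ∀ i, Measurable (Y i))
    (hK : Measurable K) : Measurable fun ω => ∑ i ∈ range (K ω), Y i ω :=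
  (measurable_from_prod_countable_right (f := fun p : ℕ × Ω => ∑ i ∈ range p.1, Y i p.2)
    fun n => Finset.measurable_sum (range n) fun i _ => hY i).comp (hK.prodMk measurable_id)

theorem lintegral_ofReal_pow_eq_ofReal_integral {f : Ω → ℝ} (hf : 0 ≤ᵐ[μ] f) {n : ℕ}
    (hint : Integrable (fun ω => f ω ^ n) μ) :
    ∫⁻ ω, ENNReal.ofReal (f ω) ^ n ∂μ = ENNReal.ofReal (∫ ω, f ω ^ n ∂μ) := by
  rw [ofReal_integral_eq_lintegral_ofReal hint (hf.mono fun ω hω => pow_nonneg hω n)]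
  exact lintegral_congr_ae (hf.mono fun ω hω => (ENNReal.ofReal_pow hω n).symm)

theorem lintegral_natCast_eq_ofReal_integral {f : Ω → ℕ}
    (hf : Integrable (fun ω => (f ω : ℝ)) μ) :
    ∫⁻ ω, (f ω : ℝ≥0∞) ∂μ = ENNReal.ofReal (∫ ω, (f ω : ℝ) ∂μ) := by
  simp_rw [← ENNReal.ofReal_natCast]
  exact (ofReal_integral_eq_lintegral_ofReal hf (ae_of_all _ fun ω => Nat.cast_nonneg _)).symm

theorem integrable_natCast_comp_of_le_sq {K : Ω → ℕ} (hK : Measurable K)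
    (hK2 : Integrable (fun ω => (K ω : ℝ) ^ 2) μ) {g : ℕ → ℕ} (hg : ∀ n, g n ≤ n ^ 2) :
    Integrable (fun ω => (g (K ω) : ℝ)) μ :=
  hK2.mono' ((measurable_from_top (f := fun n => (g n : ℝ))).comp hK).aestronglyMeasurable
    (ae_of_all _ fun ω => by simpa using (Nat.cast_le (α := ℝ)).2 (hg (K ω)))

theorem integral_natCast_mul_sub_one_nonneg (K : Ω → ℕ) :
    0 ≤ ∫ ω, (K ω : ℝ) * ((K ω : ℝ) - 1) ∂μ :=
  integral_nonneg fun ω => show (0 : ℝ) ≤ _ by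
    rw [← Nat.cast_descFactorial_two]
    exact Nat.cast_nonneg _

theorem lintegral_comp_eq_lintegral_lintegral_of_indepFun [IsFiniteMeasure μ] {α β : Type*}
    [MeasurableSpace α] [MeasurableSpace β] {K : Ω → α} {Y : Ω → β} (hK : Measurable K)
    (hY : Measurable Y) (hKY : IndepFun K Y μ) {G : α → β → ℝ≥0∞}
    (hG : Measurable (Function.uncurry G)) :
    ∫⁻ ω, G (K ω) (Y ω) ∂μ = ∫⁻ ω, ∫⁻ ω', G (K ω) (Y ω') ∂μ ∂μ := by
  have hlaw := (indepFun_iff_map_prod_eq_prod_map_map hK.aemeasurable hY.aemeasurable).1 hKY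
  have hinner : Measurable fun a => ∫⁻ b, G a b ∂(μ.map Y) := hG.lintegral_prod_right'
  calc ∫⁻ ω, G (K ω) (Y ω) ∂μ = ∫⁻ p, Function.uncurry G p ∂(μ.map fun ω => (K ω, Y ω)) :=
        (lintegral_map hG (hK.prodMk hY)).symm
    _ = ∫⁻ a, ∫⁻ b, G a b ∂(μ.map Y) ∂(μ.map K) := by
        rw [hlaw, lintegral_prod _ hG.aemeasurable]
        rfl
    _ = ∫⁻ ω, ∫⁻ ω', G (K ω) (Y ω') ∂μ ∂μ := by
        rw [lintegral_map hinner hK]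
        exact lintegral_congr fun ω => lintegral_map (hG.comp measurable_prodMk_left) hY

section Wald

variable {Z : ℕ → Ω → ℝ≥0∞} {m q : ℝ≥0∞} {K : Ω → ℕ}

theorem lintegral_sum_range_eq (hZ : ∀ i, Measurable (Z i)) (hm : ∀ i, ∫⁻ ω, Z i ω ∂μ = m)
    (n : ℕ) : ∫⁻ ω, ∑ i ∈ range n, Z i ω ∂μ = n * m := by
  simp [lintegral_finsetSum _ fun i _ => hZ i, hm]

theorem lintegral_sq_sum_range_eq (hZ : ∀ i, Measurable (Z i))
    (hindep : Pairwise fun i j => IndepFun (Z i) (Z j) μ) (hm : ∀ i, ∫⁻ ω, Z i ω ∂μ = m)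
    (hq : ∀ i, ∫⁻ ω, Z i ω ^ 2 ∂μ = q) (n : ℕ) :
    ∫⁻ ω, (∑ i ∈ range n, Z i ω) ^ 2 ∂μ = n * q + n.descFactorial 2 * m ^ 2 := by
  have hprod (i j : ℕ) : ∫⁻ ω, Z i ω * Z j ω ∂μ = if i = j then q else m ^ 2 := by
    split_ifs with hij
    · subst hij
      simp_rw [← sq, hq]
    · exact (lintegral_mul_eq_lintegral_mul_lintegral_of_indepFun (hZ i) (hZ j)
        (hindep hij)).trans (by rw [hm, hm, sq])
  have hrow (i : ℕ) (hi : i ∈ range n) :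
      ∑ j ∈ range n, ∫⁻ ω, Z i ω * Z j ω ∂μ = q + (n - 1 : ℕ) * m ^ 2 := by
    rw [← add_sum_erase _ _ hi, hprod, if_pos rfl,
      sum_congr rfl fun j hj => (hprod i j).trans (if_neg (ne_of_mem_erase hj).symm),
      sum_const, card_erase_of_mem hi, card_range, nsmul_eq_mul]
  have hZZ (i j : ℕ) : Measurable fun ω => Z i ω * Z j ω := (hZ i).mul (hZ j)
  simp_rw [sq, sum_mul_sum]
  rw [lintegral_finsetSum _ fun i _ => Finset.measurable_sum (range n) fun j _ => hZZ i j]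
  simp_rw [lintegral_finsetSum _ fun j _ => hZZ _ j]
  rw [sum_congr rfl hrow, sum_const, card_range, nsmul_eq_mul, Nat.descFactorial_succ,
    Nat.descFactorial_one]
  push_cast
  ring

theorem lintegral_sum_range_of_indepFun [IsFiniteMeasure μ] (hZ : ∀ i, Measurable (Z i))
    (hK : Measurable K) (hKZ : IndepFun K (fun ω i => Z i ω) μ)
    (hm : ∀ i, ∫⁻ ω, Z i ω ∂μ = m) :
    ∫⁻ ω, ∑ i ∈ range (K ω), Z i ω ∂μ = (∫⁻ ω, (K ω : ℝ≥0∞) ∂μ) * m := by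
  rw [lintegral_comp_eq_lintegral_lintegral_of_indepFun hK (measurable_pi_lambda _ hZ) hKZ
    (G := fun n y => ∑ i ∈ range n, y i) (measurable_from_prod_countable_right fun n =>
      Finset.measurable_sum (range n) fun i _ => measurable_pi_apply i)]
  simp_rw [lintegral_sum_range_eq hZ hm]
  exact lintegral_mul_const _ (measurable_from_top.comp hK)

theorem lintegral_sq_sum_range_of_indepFun [IsFiniteMeasure μ] (hZ : ∀ i, Measurable (Z i))
    (hK : Measurable K) (hKZ : IndepFun K (fun ω i => Z i ω) μ)
    (hindep : Pairwise fun i j => IndepFun (Z i) (Z j) μ) (hm : ∀ i, ∫⁻ ω, Z i ω ∂μ = m)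
    (hq : ∀ i, ∫⁻ ω, Z i ω ^ 2 ∂μ = q) :
    ∫⁻ ω, (∑ i ∈ range (K ω), Z i ω) ^ 2 ∂μ =
      (∫⁻ ω, (K ω : ℝ≥0∞) ∂μ) * q + (∫⁻ ω, ((K ω).descFactorial 2 : ℝ≥0∞) ∂μ) * m ^ 2 := by
  rw [lintegral_comp_eq_lintegral_lintegral_of_indepFun hK (measurable_pi_lambda _ hZ) hKZ
    (G := fun n y => (∑ i ∈ range n, y i) ^ 2) (measurable_from_prod_countable_right fun n =>
      (Finset.measurable_sum (range n) fun i _ => measurable_pi_apply i).pow_const 2)]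
  simp_rw [lintegral_sq_sum_range_eq hZ hindep hm hq]
  have hK₁ : Measurable fun ω => (K ω : ℝ≥0∞) := measurable_from_top.comp hK
  have hK₂ : Measurable fun ω => ((K ω).descFactorial 2 : ℝ≥0∞) :=
    (measurable_from_top (f := fun n : ℕ => (n.descFactorial 2 : ℝ≥0∞))).comp hK
  rw [lintegral_add_left (hK₁.mul_const _), lintegral_mul_const _ hK₁, lintegral_mul_const _ hK₂]

theorem lintegral_sq_const_add_sum_range_of_indepFun [IsProbabilityMeasure μ]
    (hZ : ∀ i, Measurable (Z i)) (hK : Measurable K) (hKZ : IndepFun K (fun ω i => Z i ω) μ)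
    (hindep : Pairwise fun i j => IndepFun (Z i) (Z j) μ) (hm : ∀ i, ∫⁻ ω, Z i ω ∂μ = m)
    (hq : ∀ i, ∫⁻ ω, Z i ω ^ 2 ∂μ = q) (a : ℝ≥0∞) :
    ∫⁻ ω, (a + ∑ i ∈ range (K ω), Z i ω) ^ 2 ∂μ =
      a ^ 2 + 2 * a * ((∫⁻ ω, (K ω : ℝ≥0∞) ∂μ) * m) +
        ((∫⁻ ω, (K ω : ℝ≥0∞) ∂μ) * q + (∫⁻ ω, ((K ω).descFactorial 2 : ℝ≥0∞) ∂μ) * m ^ 2) := by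
  have hT := measurable_sum_range_of_measurable hZ hK
  simp_rw [add_sq]
  rw [lintegral_add_right _ (hT.pow_const 2), lintegral_add_left measurable_const,
    lintegral_const_mul _ hT, lintegral_sum_range_of_indepFun hZ hK hKZ hm,
    lintegral_sq_sum_range_of_indepFun hZ hK hKZ hindep hm hq]
  simp

end Wald

theorem lintegral_ofReal_sq_const_add_sum_range_le [IsProbabilityMeasure μ] {Y : ℕ → Ω → ℝ}
    {K : Ω → ℕ} {b m q : ℝ} (hY : ∀ i, Measurable (Y i)) (hK : Measurable K)
    (hKY : IndepFun K (fun ω i => Y i ω) μ)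
    (hindep : Pairwise fun i j => IndepFun (Y i) (Y j) μ)
    (hm : ∀ i, ∫⁻ ω, ENNReal.ofReal (Y i ω) ∂μ = ENNReal.ofReal m)
    (hq : ∀ i, ∫⁻ ω, ENNReal.ofReal (Y i ω) ^ 2 ∂μ = ENNReal.ofReal q)
    (hK2 : Integrable (fun ω => (K ω : ℝ) ^ 2) μ) (hb : 0 ≤ b) (hm₀ : 0 ≤ m) (hq₀ : 0 ≤ q) :
    ∫⁻ ω, ENNReal.ofReal (b + ∑ i ∈ range (K ω), Y i ω) ^ 2 ∂μ ≤
      ENNReal.ofReal (b ^ 2 + 2 * b * ((∫ ω, (K ω : ℝ) ∂μ) * m) +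
        ((∫ ω, (K ω : ℝ) ∂μ) * q + (∫ ω, (K ω : ℝ) * ((K ω : ℝ) - 1) ∂μ) * m ^ 2)) := by
  have hν : ∫⁻ ω, (K ω : ℝ≥0∞) ∂μ = ENNReal.ofReal (∫ ω, (K ω : ℝ) ∂μ) :=
    lintegral_natCast_eq_ofReal_integral
      (integrable_natCast_comp_of_le_sq hK hK2 (g := id) fun n => Nat.le_self_pow two_ne_zero n)
  have hν₂ : ∫⁻ ω, ((K ω).descFactorial 2 : ℝ≥0∞) ∂μ =
      ENNReal.ofReal (∫ ω, (K ω : ℝ) * ((K ω : ℝ) - 1) ∂μ) := by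
    simp_rw [← Nat.cast_descFactorial_two]
    exact lintegral_natCast_eq_ofReal_integral
      (integrable_natCast_comp_of_le_sq hK hK2 fun n => Nat.descFactorial_le_pow n 2)
  have hsum_le (ω : Ω) : ENNReal.ofReal (b + ∑ i ∈ range (K ω), Y i ω) ≤
      ENNReal.ofReal b + ∑ i ∈ range (K ω), ENNReal.ofReal (Y i ω) :=
    ENNReal.ofReal_add_le.trans (add_le_add le_rfl (Finset.le_sum_of_subadditive _
      ENNReal.ofReal_zero.le (fun _ _ => ENNReal.ofReal_add_le) _ _))
  calc ∫⁻ ω, ENNReal.ofReal (b + ∑ i ∈ range (K ω), Y i ω) ^ 2 ∂μ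
      ≤ ∫⁻ ω, (ENNReal.ofReal b + ∑ i ∈ range (K ω), ENNReal.ofReal (Y i ω)) ^ 2 ∂μ :=
        lintegral_mono fun ω => pow_le_pow_left₀ zero_le (hsum_le ω) 2
    _ = _ := lintegral_sq_const_add_sum_range_of_indepFun (fun i => (hY i).ennreal_ofReal) hK
          (hKY.comp measurable_id (measurable_pi_lambda _ fun i =>
            ENNReal.measurable_ofReal.comp (measurable_pi_apply i)))
          (fun i j hij => (hindep hij).comp ENNReal.measurable_ofReal ENNReal.measurable_ofReal)
          hm hq _
    _ = _ := by
        rw [hν, hν₂]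
        lift b to ℝ≥0 using hb
        lift m to ℝ≥0 using hm₀
        lift q to ℝ≥0 using hq₀
        lift ∫ ω, (K ω : ℝ) ∂μ to ℝ≥0 using integral_nonneg fun ω => Nat.cast_nonneg _ with ν
        lift ∫ ω, (K ω : ℝ) * ((K ω : ℝ) - 1) ∂μ to ℝ≥0
          using integral_natCast_mul_sub_one_nonneg K with ν₂
        simp only [ENNReal.ofReal_coe_nnreal]
        norm_cast
        rw [ENNReal.ofReal_coe_nnreal]

theorem ofReal_integral_comp_sq_le {f : ℝ → ℝ} {c : ℝ} (hc : 0 ≤ c)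
    (hf : ∀ x, 0 ≤ x → f x ∈ Set.Icc 0 (c * x)) {X : Ω → ℝ} (hX : Measurable X)
    (hpos : 0 ≤ᵐ[μ] X) (hint2 : Integrable (fun ω => f (X ω) ^ 2) μ) :
    ENNReal.ofReal (∫ ω, f (X ω) ^ 2 ∂μ) ≤
      ENNReal.ofReal (c ^ 2) * ∫⁻ ω, ENNReal.ofReal (X ω) ^ 2 ∂μ :=
  calc ENNReal.ofReal (∫ ω, f (X ω) ^ 2 ∂μ) = ∫⁻ ω, ENNReal.ofReal (f (X ω)) ^ 2 ∂μ :=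
        (lintegral_ofReal_pow_eq_ofReal_integral (hpos.mono fun ω hω => (hf _ hω).1) hint2).symm
    _ ≤ ∫⁻ ω, ENNReal.ofReal (c ^ 2) * ENNReal.ofReal (X ω) ^ 2 ∂μ := by
        refine lintegral_mono_ae (hpos.mono fun ω hω => ?_)
        rw [ENNReal.ofReal_pow hc, ← mul_pow, ← ENNReal.ofReal_mul hc]
        exact pow_le_pow_left₀ zero_le (ENNReal.ofReal_le_ofReal (hf _ hω).2) 2
    _ = ENNReal.ofReal (c ^ 2) * ∫⁻ ω, ENNReal.ofReal (X ω) ^ 2 ∂μ :=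
        lintegral_const_mul _ (hX.ennreal_ofReal.pow_const 2)

theorem integral_comp_sq_le_of_fixedPoint [IsProbabilityMeasure μ] {f : ℝ → ℝ} {c B ν ν₂ : ℝ}
    {K : Ω → ℕ} {h : Ω → ℝ} {H : ℕ → Ω → ℝ} (hc : 0 ≤ c) (hB : 0 ≤ B) (hf_meas : Measurable f)
    (hf : ∀ x, 0 ≤ x → f x ∈ Set.Icc 0 (c * x)) (hK : Measurable K) (hh : Measurable h)
    (hH : ∀ i, Measurable (H i)) (hdist : ∀ i, IdentDistrib (H i) h μ μ)
    (hindep : Pairwise fun i j => IndepFun (H i) (H j) μ)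
    (hKH : IndepFun K (fun ω i => H i ω) μ)
    (hfix : IdentDistrib h (fun ω => B + ∑ i ∈ range (K ω), f (H i ω)) μ μ)
    (hpos : 0 ≤ᵐ[μ] h) (hK2 : Integrable (fun ω => (K ω : ℝ) ^ 2) μ)
    (hν : ∫ ω, (K ω : ℝ) ∂μ = ν) (hν₂ : ∫ ω, (K ω : ℝ) * ((K ω : ℝ) - 1) ∂μ = ν₂)
    (hint : Integrable (fun ω => f (h ω)) μ) (hint2 : Integrable (fun ω => f (h ω) ^ 2) μ) :
    ∫ ω, f (h ω) ^ 2 ∂μ ≤ c ^ 2 * (B ^ 2 + 2 * B * (ν * ∫ ω, f (h ω) ∂μ) +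
      (ν * ∫ ω, f (h ω) ^ 2 ∂μ + ν₂ * (∫ ω, f (h ω) ∂μ) ^ 2)) := by
  have hfh : 0 ≤ᵐ[μ] fun ω => f (h ω) := hpos.mono fun ω hω => (hf _ hω).1
  have hmoment (n : ℕ) (hn : Integrable (fun ω => f (h ω) ^ n) μ) (i : ℕ) :
      ∫⁻ ω, ENNReal.ofReal (f (H i ω)) ^ n ∂μ = ENNReal.ofReal (∫ ω, f (h ω) ^ n ∂μ) :=
    ((hdist i).comp ((ENNReal.measurable_ofReal.comp hf_meas).pow_const n)).lintegral_eq.trans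
      (lintegral_ofReal_pow_eq_ofReal_integral hfh hn)
  have hm₀ : 0 ≤ ∫ ω, f (h ω) ∂μ := integral_nonneg_of_ae hfh
  have hq₀ : 0 ≤ ∫ ω, f (h ω) ^ 2 ∂μ := integral_nonneg fun ω => sq_nonneg _
  have hν₀ : 0 ≤ ν := hν ▸ integral_nonneg fun ω => Nat.cast_nonneg _
  have hν₂₀ : 0 ≤ ν₂ := hν₂ ▸ integral_natCast_mul_sub_one_nonneg K
  rw [← ENNReal.ofReal_le_ofReal_iff (by positivity), ENNReal.ofReal_mul (sq_nonneg c), ← hν,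
    ← hν₂]
  calc ENNReal.ofReal (∫ ω, f (h ω) ^ 2 ∂μ)
      ≤ ENNReal.ofReal (c ^ 2) * ∫⁻ ω, ENNReal.ofReal (h ω) ^ 2 ∂μ :=
        ofReal_integral_comp_sq_le hc hf hh hpos hint2
    _ = ENNReal.ofReal (c ^ 2) *
          ∫⁻ ω, ENNReal.ofReal (B + ∑ i ∈ range (K ω), f (H i ω)) ^ 2 ∂μ :=
        congrArg _ (hfix.comp (ENNReal.measurable_ofReal.pow_const 2)).lintegral_eq
    _ ≤ _ := by
        gcongr
        exact lintegral_ofReal_sq_const_add_sum_range_le (fun i => hf_meas.comp (hH i)) hK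
          (hKH.comp measurable_id (measurable_pi_lambda _ fun i =>
            hf_meas.comp (measurable_pi_apply i)))
          (fun i j hij => (hindep hij).comp hf_meas hf_meas)
          (by simpa using hmoment 1 (by simpa using hint)) (hmoment 2 hint2) hK2 hB hm₀ hq₀

end CompoundSums

/-- Second-moment bound for the fixed point of the tree recursion in the finite-variance
case: if `h =_d B + Σ_{i=1}^K ξ(h_i)` with `ξ(x) = atanh(β̂ tanh x)`, `β̂ = tanh β ∈ (0,1)`,
`B > 0`, `E[K] = ν`, `E[K²] < ∞`, `β̂²ν < 1`, then
`E[ξ(h)²] ≤ (β̂²ν₂/(1-β̂²ν)) E[ξ(h)]² + B (Bβ̂² + 2β̂²ν E[ξ(h)])/(1-β̂²ν)`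
where `ν₂ = E[K(K-1)]`. -/
theorem second_moment_bound {Ω : Type*} [MeasurableSpace Ω] (μ : Measure Ω)
    [IsProbabilityMeasure μ] (β B ν ν₂ : ℝ) (hβ : 0 < β) (hB : 0 < B)
    (K : Ω → ℕ) (hKmeas : Measurable K) (h : Ω → ℝ) (hmeas : Measurable h)
    (H : ℕ → Ω → ℝ) (hHmeas : ∀ i, Measurable (H i))
    (ξ : ℝ → ℝ) (hξ : ξ = fun x => artanh (Real.tanh β * Real.tanh x))
    (hdist : ∀ i, Measure.map (H i) μ = Measure.map h μ)
    (hiid : iIndepFun H μ)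
    (hKH : IndepFun K (fun ω i => H i ω) μ)
    (hfix : Measure.map h μ =
      Measure.map (fun ω => B + ∑ i ∈ Finset.range (K ω), ξ (H i ω)) μ)
    (hpos : ∀ᵐ ω ∂μ, 0 ≤ h ω)
    (hK2int : Integrable (fun ω => (K ω : ℝ) ^ 2) μ)
    (hν : ∫ ω, (K ω : ℝ) ∂μ = ν)
    (hν₂ : ∫ ω, (K ω : ℝ) * ((K ω : ℝ) - 1) ∂μ = ν₂)
    (hcontr : Real.tanh β ^ 2 * ν < 1)
    (hint : Integrable (fun ω => ξ (h ω)) μ)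
    (hint2 : Integrable (fun ω => ξ (h ω) ^ 2) μ) :
    ∫ ω, ξ (h ω) ^ 2 ∂μ ≤
      Real.tanh β ^ 2 * ν₂ / (1 - Real.tanh β ^ 2 * ν) * (∫ ω, ξ (h ω) ∂μ) ^ 2 +
        B * (B * Real.tanh β ^ 2 + 2 * Real.tanh β ^ 2 * ν * ∫ ω, ξ (h ω) ∂μ) /
          (1 - Real.tanh β ^ 2 * ν) := by
  have hc₀ : 0 ≤ Real.tanh β := Real.tanh_nonneg hβ.le
  have hξ_meas : Measurable ξ :=
    hξ ▸ measurable_artanh.comp (measurable_const.mul Real.continuous_tanh.measurable)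
  have hfix' : IdentDistrib h (fun ω => B + ∑ i ∈ range (K ω), ξ (H i ω)) μ μ :=
    ⟨hmeas.aemeasurable, (measurable_const.add (measurable_sum_range_of_measurable
      (fun i => hξ_meas.comp (hHmeas i)) hKmeas)).aemeasurable, hfix⟩
  have hrec := integral_comp_sq_le_of_fixedPoint hc₀ hB.le hξ_meas
    (fun x hx => hξ ▸ artanh_mul_tanh_mem_Icc hc₀ (Real.tanh_lt_one β).le hx) hKmeas hmeas hHmeas
    (fun i => ⟨(hHmeas i).aemeasurable, hmeas.aemeasurable, hdist i⟩)
    (fun i j hij => hiid.indepFun hij) hKH hfix' hpos hK2int hν hν₂ hint hint2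
  rw [div_mul_eq_mul_div, ← add_div, le_div_iff₀ (sub_pos.2 hcontr)]
  linear_combination hrec
end
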